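/- Let G be a finite nilpotent group of order n = p_1^{α_1} ··· p_r^{α_r} with distinct primes p_1 < ··· < p_r and Sylow subgroups P_1, ..., P_r. Let x ∈ G \ {e}, let M be a maximal cyclic subgroup of G containing x with |M| = p_1^{γ_1} ··· p_r^{γ_r} and o(x) = ∏_{i ∈ τ_x} p_i^{β_i}, where τ_x = { j : x_j ≠ e } in the Sylow decomposition x = x_1 ··· x_r, and set M_i = M ∩ P_i. Then deg(x) = o(x) − φ(o(x)) + (∏_{j ∈ [r] \ τ_x} p_j^{α_j}) · (∏_{i ∈ τ_x} (p_i^{γ_i} − p_i^{β_i − 1})) − 1 if and only if ∏_{i ∈ τ_x} M_i is the unique maximal cyclic subgroup of ∏_{i ∈ τ_x} P_i containing x. -/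

import Mathlib

/-- The power graph of a group: distinct `x` and `y` are adjacent iff one is a
positive power of the other. -/
def powerGraph (G : Type*) [Group G] : SimpleGraph G where
  Adj x y := x ≠ y ∧ ((∃ k : ℕ, 0 < k ∧ x = y ^ k) ∨ (∃ k : ℕ, 0 < k ∧ y = x ^ k))
  symm := by
    constructor
    intro x y h
    exact ⟨h.1.symm, h.2.symm⟩
  loopless := by
    constructor
    intro x h
    exact h.1 rfl

noncomputable instance powerGraphDecidableAdj (G : Type*) [Group G] :
    DecidableRel (powerGraph G).Adj :=
  Classical.decRel _

/-- The vertex connectivity of a finite graph: the minimum number of vertices whose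
deletion yields a disconnected graph or a graph with exactly one vertex. -/
noncomputable def vertexConnectivity {V : Type*} [Fintype V] (Γ : SimpleGraph V) : ℕ :=
  sInf {n | ∃ S : Finset V, S.card = n ∧
    (¬ (SimpleGraph.induce ((↑S : Set V)ᶜ) Γ).Preconnected ∨ ((↑S : Set V)ᶜ).ncard = 1)}

/-- A subgroup is a maximal cyclic subgroup if it is cyclic and not properly contained
in any cyclic subgroup. -/
def IsMaximalCyclic {G : Type*} [Group G] (M : Subgroup G) : Prop :=
  IsCyclic ↥M ∧ ∀ N : Subgroup G, IsCyclic ↥N → M ≤ N → M = N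

/-- `K` is a maximal cyclic subgroup of the subgroup `H`. -/
def IsMaximalCyclicIn {G : Type*} [Group G] (H K : Subgroup G) : Prop :=
  IsCyclic ↥K ∧ K ≤ H ∧ ∀ N : Subgroup G, IsCyclic ↥N → N ≤ H → K ≤ N → K = N

/-- A generalized quaternion group: a dicyclic group `Q_{4n}` with `n ≥ 2` a power of 2. -/
def IsGeneralizedQuaternion (G : Type*) [Group G] : Prop :=
  ∃ n : ℕ, 2 ≤ n ∧ (∃ k : ℕ, n = 2 ^ k) ∧ Nonempty (G ≃* QuaternionGroup n)

/-!
Write `H = ∏_{i ∈ τ} P_i` and `K = ∏_{i ∉ τ} P_i`. In the nilpotent group `G` these are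
commuting subgroups of coprime orders with `H K = G`, and `x ∈ H`. The closed neighbourhood of
`x` is `⟨x⟩ ∪ {y | x ∈ ⟨y⟩}`, whose two parts meet in the `φ(o(x))` generators of `⟨x⟩`, so
`deg x + 1 + φ(o(x)) = o(x) + #{y | x ∈ ⟨y⟩}`. As `x ∈ ⟨hk⟩ ↔ x ∈ ⟨h⟩` for `h ∈ H`, `k ∈ K`,
the last count is `|K| · #{y ∈ H | x ∈ ⟨y⟩}`.
The subgroup `M ∩ H = ∏_{i ∈ τ} M_i` is a maximal cyclic subgroup of `H`; inside it
`x ∈ ⟨y⟩` means `o(x) ∣ o(y)`, and counting factor by factor gives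
`∏_{i ∈ τ} (p_i^{γ_i} - p_i^{β_i - 1})` such `y`. So equality holds iff every `y ∈ H` with
`x ∈ ⟨y⟩` lies in `M ∩ H`, i.e. iff `M ∩ H` is the only maximal cyclic subgroup of `H`
containing `x`.
-/

open Subgroup

section Cyclic

variable {G : Type*} [Group G] [Finite G]

theorem mem_zpowers_pow_orderOf_div {g z : G} {n : ℕ} (hn : n ∣ orderOf g)
    (hz : z ∈ zpowers g) (hzn : orderOf z ∣ n) : z ∈ zpowers (g ^ (orderOf g / n)) := by
  obtain ⟨k, rfl⟩ := mem_powers_iff_mem_zpowers.2 hz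
  have hkn : orderOf g ∣ k * n := orderOf_dvd_of_pow_eq_one <| by
    rw [pow_mul, orderOf_dvd_iff_pow_eq_one.1 hzn]
  obtain ⟨m, rfl⟩ : orderOf g / n ∣ k := by
    rw [← Nat.div_mul_cancel hn] at hkn
    exact Nat.dvd_of_mul_dvd_mul_right (Nat.pos_of_dvd_of_pos hn (orderOf_pos g)) hkn
  show g ^ (orderOf g / n * m) ∈ _
  rw [pow_mul]
  exact npow_mem_zpowers _ m

theorem mem_zpowers_iff_orderOf_dvd {M : Subgroup G} [IsCyclic M] {x y : G} (hx : x ∈ M)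
    (hy : y ∈ M) : x ∈ zpowers y ↔ orderOf x ∣ orderOf y := by
  refine ⟨orderOf_dvd_of_mem_zpowers, fun hxy => ?_⟩
  obtain ⟨g, rfl⟩ := (M.isCyclic_iff_exists_zpowers_eq_top).1 ‹_›
  have hyg : orderOf y ∣ orderOf g := orderOf_dvd_of_mem_zpowers hy
  have hy_eq : zpowers y = zpowers (g ^ (orderOf g / orderOf y)) := by
    refine eq_of_le_of_card_ge (zpowers_le.2 (mem_zpowers_pow_orderOf_div hyg hy dvd_rfl)) ?_
    rw [Nat.card_zpowers, Nat.card_zpowers, orderOf_pow_orderOf_div (orderOf_pos g).ne' hyg]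
  rw [hy_eq]
  exact mem_zpowers_pow_orderOf_div hyg hx hxy

theorem ncard_setOf_mem_zpowers_orderOf_dvd {g : G} {n : ℕ} (hn : n ∣ orderOf g) :
    {z | z ∈ zpowers g ∧ orderOf z ∣ n}.ncard = n := by
  have hsub : zpowers (g ^ (orderOf g / n)) ≤ zpowers g := zpowers_le.2 (npow_mem_zpowers _ _)
  have hord := orderOf_pow_orderOf_div (orderOf_pos g).ne' hn
  have hset : {z | z ∈ zpowers g ∧ orderOf z ∣ n} = zpowers (g ^ (orderOf g / n)) := by
    ext z
    exact ⟨fun hz => mem_zpowers_pow_orderOf_div hn hz.1 hz.2,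
      fun hz => ⟨hsub hz, hord ▸ orderOf_dvd_of_mem_zpowers hz⟩⟩
  rw [hset, ← Nat.card_coe_set_eq]
  exact (Nat.card_zpowers _).trans hord

theorem ncard_setOf_prime_pow_dvd_orderOf {p γ β : ℕ} (hp : p.Prime) {g : G}
    (hg : orderOf g = p ^ γ) (hβ : 1 ≤ β) (hβγ : β ≤ γ) :
    {z | z ∈ zpowers g ∧ p ^ β ∣ orderOf z}.ncard = p ^ γ - p ^ (β - 1) := by
  have hset : {z | z ∈ zpowers g ∧ p ^ β ∣ orderOf z}
      = (zpowers g : Set G) \ {z | z ∈ zpowers g ∧ orderOf z ∣ p ^ (β - 1)} := by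
    ext z
    simp only [Set.mem_ofPred_eq, Set.mem_sdiff, SetLike.mem_coe]
    refine and_congr_right fun hz => ?_
    rw [and_iff_right hz]
    obtain ⟨c, -, hc⟩ := (Nat.dvd_prime_pow hp).1 (hg ▸ orderOf_dvd_of_mem_zpowers hz)
    rw [hc, Nat.pow_dvd_pow_iff_le_right hp.one_lt, Nat.pow_dvd_pow_iff_le_right hp.one_lt]
    omega
  rw [hset, Set.ncard_sdiff (fun z hz => hz.1), ← Nat.card_coe_set_eq, SetLike.coe_sort_coe,
    Nat.card_zpowers, hg, ncard_setOf_mem_zpowers_orderOf_dvd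
      (hg ▸ pow_dvd_pow p (by omega))]

theorem ncard_setOf_mem_zpowers_and_mem_zpowers (x : G) :
    {y | y ∈ zpowers x ∧ x ∈ zpowers y}.ncard = (orderOf x).totient := by
  classical
  have : Fintype (zpowers x) := Fintype.ofFinite _
  have hset : {y | y ∈ zpowers x ∧ x ∈ zpowers y}
      = Subtype.val '' {a : zpowers x | orderOf a = orderOf x} := by
    ext y
    simp only [Set.mem_ofPred_eq, Set.mem_image, Subtype.exists, orderOf_mk, exists_and_right,
      exists_eq_right]
    refine ⟨fun ⟨hy, hxy⟩ => ⟨hy, ?_⟩, fun ⟨hy, hyx⟩ => ⟨hy, ?_⟩⟩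
    · exact Nat.dvd_antisymm (orderOf_dvd_of_mem_zpowers hy) (orderOf_dvd_of_mem_zpowers hxy)
    · exact (mem_zpowers_iff_orderOf_dvd (mem_zpowers x) hy).2 (dvd_of_eq hyx.symm)
  rw [hset, Subtype.val_injective.injOn.ncard_image, Set.ncard_eq_toFinset_card',
    Set.toFinset_ofPred]
  refine IsCyclic.card_orderOf_eq_totient ?_
  rw [← Nat.card_eq_fintype_card, Nat.card_zpowers]

end Cyclic

section PowerGraph

variable {G : Type*} [Group G]

theorem exists_pos_pow_eq_iff_mem_zpowers [Finite G] {a b : G} :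
    (∃ k : ℕ, 0 < k ∧ a = b ^ k) ↔ a ∈ zpowers b := by
  refine ⟨fun ⟨k, _, hk⟩ => hk ▸ npow_mem_zpowers b k, fun ha => ?_⟩
  obtain ⟨k, hk⟩ := mem_powers_iff_mem_zpowers.2 ha
  refine ⟨k + orderOf b, by have := orderOf_pos b; omega, ?_⟩
  rw [pow_add, pow_orderOf_eq_one, mul_one]
  exact hk.symm

theorem powerGraph_adj_iff [Finite G] {x y : G} :
    (powerGraph G).Adj x y ↔ x ≠ y ∧ (y ∈ zpowers x ∨ x ∈ zpowers y) := by
  change x ≠ y ∧ _ ↔ _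
  rw [exists_pos_pow_eq_iff_mem_zpowers, exists_pos_pow_eq_iff_mem_zpowers, or_comm]

theorem degree_powerGraph_add_totient [Fintype G] (x : G) :
    (powerGraph G).degree x + 1 + (orderOf x).totient
      = orderOf x + {y | x ∈ zpowers y}.ncard := by
  have hnbhd : insert x ((powerGraph G).neighborSet x)
      = (zpowers x : Set G) ∪ {y | x ∈ zpowers y} := by
    ext y
    by_cases hxy : x = y
    · subst hxy
      simp [mem_zpowers]
    · simp [hxy, Ne.symm hxy, powerGraph_adj_iff]
  have hdeg : (powerGraph G).degree x = ((powerGraph G).neighborSet x).ncard := by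
    rw [← SimpleGraph.card_neighborSet_eq_degree, ← Nat.card_eq_fintype_card,
      Nat.card_coe_set_eq]
  have hcap := Set.ncard_union_add_ncard_inter (zpowers x : Set G) {y | x ∈ zpowers y}
  rw [← hnbhd, Set.ncard_insert_of_notMem (powerGraph G).notMem_neighborSet_self] at hcap
  rw [hdeg, ← ncard_setOf_mem_zpowers_and_mem_zpowers, ← Nat.card_zpowers, ← SetLike.coe_sort_coe,
    Nat.card_coe_set_eq]
  exact hcap

end PowerGraph

section MaximalCyclic

variable {G : Type*} [Group G] [Finite G]

theorem exists_isMaximalCyclicIn_le {H C : Subgroup G} [IsCyclic C] (hCH : C ≤ H) :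
    ∃ K, IsMaximalCyclicIn H K ∧ C ≤ K := by
  obtain ⟨K, hCK, ⟨hK, hKH⟩, hmax⟩ :=
    Finite.exists_le_maximal (p := fun N : Subgroup G => IsCyclic N ∧ N ≤ H) ⟨‹_›, hCH⟩
  exact ⟨K, ⟨hK, hKH, fun N hN hNH hKN => le_antisymm hKN (hmax ⟨hN, hNH⟩ hKN)⟩, hCK⟩

theorem forall_isMaximalCyclicIn_eq_iff {H C : Subgroup G} [IsCyclic C] (hCH : C ≤ H) (x : G) :
    (∀ K, IsMaximalCyclicIn H K → x ∈ K → K = C) ↔ ∀ y ∈ H, x ∈ zpowers y → y ∈ C := by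
  constructor
  · intro huniq y hy hxy
    obtain ⟨K, hK, hyK⟩ := exists_isMaximalCyclicIn_le (zpowers_le.2 hy)
    exact huniq K hK (hyK hxy) ▸ hyK (mem_zpowers y)
  · intro hgen K ⟨hK, hKH, hmax⟩ hxK
    obtain ⟨y, rfl⟩ := (K.isCyclic_iff_exists_zpowers_eq_top).1 hK
    exact hmax C ‹_› hCH (zpowers_le.2 (hgen y (hKH (mem_zpowers y)) hxK))

theorem ncard_setOf_mem_and_mem_zpowers_eq_iff {H C : Subgroup G} [IsCyclic C] (hCH : C ≤ H)
    (x : G) :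
    {y | y ∈ C ∧ x ∈ zpowers y}.ncard = {y | y ∈ H ∧ x ∈ zpowers y}.ncard ↔
      ∀ K, IsMaximalCyclicIn H K → x ∈ K → K = C := by
  have hsub : {y | y ∈ C ∧ x ∈ zpowers y} ⊆ {y | y ∈ H ∧ x ∈ zpowers y} :=
    fun y hy => ⟨hCH hy.1, hy.2⟩
  rw [forall_isMaximalCyclicIn_eq_iff hCH]
  refine ⟨fun h y hy hxy => ?_, fun h => congrArg Set.ncard (hsub.antisymm ?_)⟩
  · exact ((Set.eq_of_subset_of_ncard_le hsub h.ge).superset ⟨hy, hxy⟩).1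
  · exact fun y hy => ⟨h y hy.1 hy.2, hy.2⟩

end MaximalCyclic

section Product

variable {G : Type*} [Group G]

theorem Commute.mem_zpowers_mul_left {a b : G} (hab : Commute a b)
    (hco : (orderOf a).Coprime (orderOf b)) : a ∈ zpowers (a * b) := by
  have hpow : a ^ orderOf b = (a * b) ^ orderOf b := by
    rw [hab.mul_pow, pow_orderOf_eq_one, mul_one]
  exact zpowers_le.2 (hpow ▸ npow_mem_zpowers _ _) (mem_zpowers_pow_iff.2 hco.symm)

theorem Commute.mem_zpowers_mul_right {a b : G} (hab : Commute a b)
    (hco : (orderOf a).Coprime (orderOf b)) : b ∈ zpowers (a * b) :=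
  hab.eq ▸ hab.symm.mem_zpowers_mul_left hco.symm

theorem Commute.zpowers_mul_eq_sup {a b : G} (hab : Commute a b)
    (hco : (orderOf a).Coprime (orderOf b)) : zpowers (a * b) = zpowers a ⊔ zpowers b :=
  le_antisymm (zpowers_le.2 (mul_mem_sup (mem_zpowers a) (mem_zpowers b)))
    (sup_le (zpowers_le.2 (hab.mem_zpowers_mul_left hco))
      (zpowers_le.2 (hab.mem_zpowers_mul_right hco)))

variable {H K : Subgroup G}

theorem commute_of_le_centralizer (hHK : H ≤ centralizer K) {h k : G} (hh : h ∈ H)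
    (hk : k ∈ K) : Commute h k :=
  (mem_centralizer_iff.1 (hHK hh) k hk).symm

theorem coprime_orderOf_of_coprime_card (hcop : (Nat.card H).Coprime (Nat.card K)) {h k : G}
    (hh : h ∈ H) (hk : k ∈ K) : (orderOf h).Coprime (orderOf k) :=
  (hcop.coprime_dvd_left (H.orderOf_dvd_natCard hh)).coprime_dvd_right (K.orderOf_dvd_natCard hk)

theorem exists_mul_eq_of_mem_sup (hHK : H ≤ centralizer K) {y : G} (hy : y ∈ H ⊔ K) :
    ∃ h ∈ H, ∃ k ∈ K, h * k = y := by
  rw [← SetLike.mem_coe,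
    coe_mul_of_left_le_normalizer_right H K (hHK.trans (centralizer_le_normalizer _))] at hy
  exact hy

theorem ncard_setOf_mem_sup_and (hHK : H ≤ centralizer K)
    (hcop : (Nat.card H).Coprime (Nat.card K)) {Q Q₁ Q₂ : G → Prop}
    (hQ : ∀ h ∈ H, ∀ k ∈ K, Q (h * k) ↔ Q₁ h ∧ Q₂ k) :
    {y | y ∈ H ⊔ K ∧ Q y}.ncard = {h | h ∈ H ∧ Q₁ h}.ncard * {k | k ∈ K ∧ Q₂ k}.ncard := by
  have hinj : Set.InjOn (fun a : G × G => a.1 * a.2)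
      ({h | h ∈ H ∧ Q₁ h} ×ˢ {k | k ∈ K ∧ Q₂ k}) := by
    rintro ⟨h₁, k₁⟩ ⟨⟨hh₁, -⟩, hk₁, -⟩ ⟨h₂, k₂⟩ ⟨⟨hh₂, -⟩, hk₂, -⟩ (heq : h₁ * k₁ = h₂ * k₂)
    have hquot : h₂⁻¹ * h₁ = k₂ * k₁⁻¹ := by
      rw [inv_mul_eq_iff_eq_mul, ← mul_assoc, ← heq, mul_inv_cancel_right]
    have hone := disjoint_def.1 (disjoint_of_coprime_natCard hcop)
      (H.mul_mem (H.inv_mem hh₂) hh₁) (hquot ▸ K.mul_mem hk₂ (K.inv_mem hk₁))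
    rw [inv_mul_eq_one] at hone
    subst hone
    rw [mul_left_cancel heq]
  rw [← Set.ncard_prod, ← hinj.ncard_image]
  congr 1
  ext y
  constructor
  · rintro ⟨hy, hQy⟩
    obtain ⟨h, hh, k, hk, rfl⟩ := exists_mul_eq_of_mem_sup hHK hy
    obtain ⟨hQ₁, hQ₂⟩ := (hQ h hh k hk).1 hQy
    exact ⟨(h, k), ⟨⟨hh, hQ₁⟩, hk, hQ₂⟩, rfl⟩
  · rintro ⟨⟨h, k⟩, ⟨⟨hh, hQ₁⟩, hk, hQ₂⟩, rfl⟩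
    exact ⟨mul_mem_sup hh hk, (hQ h hh k hk).2 ⟨hQ₁, hQ₂⟩⟩

theorem card_sup_of_coprime (hHK : H ≤ centralizer K) (hcop : (Nat.card H).Coprime (Nat.card K)) :
    Nat.card ↥(H ⊔ K) = Nat.card H * Nat.card K := by
  simpa [← Nat.card_coe_set_eq] using ncard_setOf_mem_sup_and hHK hcop (Q := fun _ => True)
    (Q₁ := fun _ => True) (Q₂ := fun _ => True) (fun _ _ _ _ => by simp)

theorem isMaximalCyclicIn_inf_of_sup_eq_top (hHK : H ≤ centralizer K)
    (hcop : (Nat.card H).Coprime (Nat.card K)) (htop : H ⊔ K = ⊤) {M : Subgroup G}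
    (hM : IsMaximalCyclic M) : IsMaximalCyclicIn H (M ⊓ H) := by
  have := hM.1
  obtain ⟨g, hg⟩ := M.isCyclic_iff_exists_zpowers_eq_top.1 hM.1
  obtain ⟨h, hh, k, hk, rfl⟩ := exists_mul_eq_of_mem_sup hHK (htop ▸ mem_top g)
  have hhk := commute_of_le_centralizer hHK hh hk
  have hcop_hk := coprime_orderOf_of_coprime_card hcop hh hk
  have hM_le : M ≤ (M ⊓ H) ⊔ (M ⊓ K) := by
    rw [← hg, zpowers_le]
    exact mul_mem_sup ⟨hg ▸ hhk.mem_zpowers_mul_left hcop_hk, hh⟩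
      ⟨hg ▸ hhk.mem_zpowers_mul_right hcop_hk, hk⟩
  obtain ⟨w, hw⟩ := (M ⊓ K).isCyclic_iff_exists_zpowers_eq_top.1 (isCyclic_of_le inf_le_left)
  have hwK : w ∈ K := (hw ▸ mem_zpowers w : w ∈ M ⊓ K).2
  refine ⟨isCyclic_of_le inf_le_left, inf_le_right, fun N hN hNH hMN => le_antisymm hMN ?_⟩
  obtain ⟨c, rfl⟩ := N.isCyclic_iff_exists_zpowers_eq_top.1 hN
  have hcH : c ∈ H := hNH (mem_zpowers c)
  have hcw := commute_of_le_centralizer hHK hcH hwK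
  have hcop_cw := coprime_orderOf_of_coprime_card hcop hcH hwK
  have hM_eq : M = zpowers (c * w) := by
    refine hM.2 _ inferInstance (hM_le.trans ?_)
    rw [hcw.zpowers_mul_eq_sup hcop_cw, hw]
    exact sup_le_sup_right hMN _
  exact le_inf (hM_eq ▸ zpowers_le.2 (hcw.mem_zpowers_mul_left hcop_cw)) hNH

variable [Finite G]

theorem mem_zpowers_mul_iff (hHK : H ≤ centralizer K) (hcop : (Nat.card H).Coprime (Nat.card K))
    {x h k : G} (hx : x ∈ H) (hh : h ∈ H) (hk : k ∈ K) :
    x ∈ zpowers (h * k) ↔ x ∈ zpowers h := by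
  have hhk := commute_of_le_centralizer hHK hh hk
  refine ⟨fun hxhk => ?_, fun hxh => zpowers_le.2
    (hhk.mem_zpowers_mul_left (coprime_orderOf_of_coprime_card hcop hh hk)) hxh⟩
  obtain ⟨n, rfl⟩ := mem_powers_iff_mem_zpowers.2 hxhk
  change (h * k) ^ n ∈ H at hx
  show (h * k) ^ n ∈ _
  rw [hhk.mul_pow] at hx ⊢
  have hkn := disjoint_def.1 (disjoint_of_coprime_natCard hcop)
    ((mul_mem_cancel_left (H.pow_mem hh n)).1 hx) (K.pow_mem hk n)
  rw [hkn, mul_one]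
  exact npow_mem_zpowers h n

theorem ncard_setOf_mem_zpowers_eq_mul (hHK : H ≤ centralizer K)
    (hcop : (Nat.card H).Coprime (Nat.card K)) (htop : H ⊔ K = ⊤) {x : G} (hx : x ∈ H) :
    {y | x ∈ zpowers y}.ncard = {y | y ∈ H ∧ x ∈ zpowers y}.ncard * Nat.card K := by
  simpa [htop, ← Nat.card_coe_set_eq] using ncard_setOf_mem_sup_and hHK hcop
    (Q := fun y => x ∈ zpowers y) (Q₁ := fun y => x ∈ zpowers y) (Q₂ := fun _ => True)
    (fun h hh k hk => by rw [mem_zpowers_mul_iff hHK hcop hx hh hk, and_true])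

end Product

theorem Nat.Coprime.mul_dvd_mul_iff_of_dvd {A B a b m n : ℕ} (hAB : A.Coprime B) (ha : a ∣ A)
    (hm : m ∣ A) (hb : b ∣ B) (hn : n ∣ B) : a * b ∣ m * n ↔ a ∣ m ∧ b ∣ n :=
  ⟨fun h => ⟨((hAB.coprime_dvd_left ha).coprime_dvd_right hn).dvd_of_dvd_mul_right
      (dvd_of_mul_right_dvd h),
    ((hAB.coprime_dvd_left hm).coprime_dvd_right hb).symm.dvd_of_dvd_mul_left
      (dvd_of_mul_left_dvd h)⟩,
   fun ⟨h₁, h₂⟩ => mul_dvd_mul h₁ h₂⟩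

theorem Nat.factorization_prod_pow_apply {ι : Type*} [Fintype ι] {p : ι → ℕ}
    (hp : ∀ i, (p i).Prime) (hinj : Function.Injective p) (e : ι → ℕ) (i : ι) :
    (∏ j, p j ^ e j).factorization (p i) = e i := by
  rw [Nat.factorization_prod fun j _ => pow_ne_zero _ (hp j).ne_zero]
  simp only [(hp _).factorization_pow, Finsupp.coe_finsetSum, Finset.sum_apply,
    Finsupp.single_apply]
  rw [Finset.sum_eq_single i (fun j _ hji => if_neg (hinj.ne hji)) (by simp), if_pos rfl]

section Family

variable {G ι : Type*} [Group G] {N : ι → Subgroup G}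

theorem le_centralizer_biSup (hcomm : Pairwise fun i j => N i ≤ centralizer (N j))
    {S : Finset ι} {i : ι} (hi : i ∉ S) : N i ≤ centralizer (⨆ j ∈ S, N j : Subgroup G) :=
  le_centralizer_iff.2 (iSup₂_le fun _ hj => hcomm fun hji => hi (hji ▸ hj))

theorem biSup_le_centralizer_biSup (hcomm : Pairwise fun i j => N i ≤ centralizer (N j))
    {S T : Finset ι} (hST : Disjoint S T) :
    ⨆ i ∈ S, N i ≤ centralizer (⨆ j ∈ T, N j : Subgroup G) :=
  iSup₂_le fun _ hi => le_centralizer_biSup hcomm (Finset.disjoint_left.1 hST hi)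

theorem pairwise_le_centralizer_of_le {N' : ι → Subgroup G}
    (hcomm : Pairwise fun i j => N i ≤ centralizer (N j)) (hle : ∀ i, N' i ≤ N i) :
    Pairwise fun i j => N' i ≤ centralizer (N' j) :=
  fun i j hij => (hle i).trans ((hcomm hij).trans (centralizer_le (hle j)))

theorem pairwise_coprime_card_of_le {N' : ι → Subgroup G}
    (hcop : Pairwise fun i j => (Nat.card (N i)).Coprime (Nat.card (N j)))
    (hle : ∀ i, N' i ≤ N i) : Pairwise fun i j => (Nat.card (N' i)).Coprime (Nat.card (N' j)) :=
  fun i j hij => ((hcop hij).coprime_dvd_left (card_dvd_of_le (hle i))).coprime_dvd_right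
    (card_dvd_of_le (hle j))

variable [DecidableEq ι]

theorem card_biSup (hcomm : Pairwise fun i j => N i ≤ centralizer (N j))
    (hcop : Pairwise fun i j => (Nat.card (N i)).Coprime (Nat.card (N j))) (S : Finset ι) :
    Nat.card ↥(⨆ i ∈ S, N i) = ∏ i ∈ S, Nat.card (N i) := by
  induction S using Finset.induction_on with
  | empty => simp
  | insert a S ha ih =>
    rw [Finset.iSup_insert, Finset.prod_insert ha, ← ih]
    refine card_sup_of_coprime (le_centralizer_biSup hcomm ha) ?_
    rw [ih]
    exact Nat.Coprime.prod_right fun j hj => hcop fun haj => ha (haj ▸ hj)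

theorem coprime_card_biSup (hcomm : Pairwise fun i j => N i ≤ centralizer (N j))
    (hcop : Pairwise fun i j => (Nat.card (N i)).Coprime (Nat.card (N j))) {S T : Finset ι}
    (hST : Disjoint S T) :
    (Nat.card ↥(⨆ i ∈ S, N i)).Coprime (Nat.card ↥(⨆ i ∈ T, N i)) := by
  rw [card_biSup hcomm hcop, card_biSup hcomm hcop]
  exact Nat.Coprime.prod_left fun i hi => Nat.Coprime.prod_right fun j hj =>
    hcop fun hij => Finset.disjoint_left.1 hST hi (hij ▸ hj)

theorem ncard_setOf_mem_biSup_and_prod_dvd_orderOf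
    (hcomm : Pairwise fun i j => N i ≤ centralizer (N j))
    (hcop : Pairwise fun i j => (Nat.card (N i)).Coprime (Nat.card (N j))) {S : Finset ι}
    {d : ι → ℕ} (hd : ∀ i ∈ S, d i ∣ Nat.card (N i)) :
    {y | y ∈ ⨆ i ∈ S, N i ∧ ∏ i ∈ S, d i ∣ orderOf y}.ncard
      = ∏ i ∈ S, {y | y ∈ N i ∧ d i ∣ orderOf y}.ncard := by
  induction S using Finset.induction_on with
  | empty => simp
  | insert a S ha ih =>
    have hcop' : (Nat.card (N a)).Coprime (Nat.card ↥(⨆ i ∈ S, N i)) := by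
      simpa using coprime_card_biSup hcomm hcop (Finset.disjoint_singleton_left.2 ha)
    have hdS : ∏ i ∈ S, d i ∣ Nat.card ↥(⨆ i ∈ S, N i) := by
      rw [card_biSup hcomm hcop]
      exact Finset.prod_dvd_prod_of_dvd _ _ fun i hi => hd i (Finset.mem_insert_of_mem hi)
    rw [Finset.iSup_insert, Finset.prod_insert ha, Finset.prod_insert ha,
      ← ih fun i hi => hd i (Finset.mem_insert_of_mem hi)]
    have hcomm' := le_centralizer_biSup hcomm ha
    refine ncard_setOf_mem_sup_and hcomm' hcop' fun h hh k hk => ?_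
    rw [(commute_of_le_centralizer hcomm' hh hk).orderOf_mul_eq_mul_orderOf_of_coprime
      (coprime_orderOf_of_coprime_card hcop' hh hk)]
    exact hcop'.mul_dvd_mul_iff_of_dvd (hd a (Finset.mem_insert_self a S))
      ((N a).orderOf_dvd_natCard hh) hdS (Subgroup.orderOf_dvd_natCard _ hk)

variable [Finite G]

theorem biSup_sup_biSup_compl_eq_top [Fintype ι]
    (hcomm : Pairwise fun i j => N i ≤ centralizer (N j))
    (hcop : Pairwise fun i j => (Nat.card (N i)).Coprime (Nat.card (N j)))
    (hcard : ∏ i, Nat.card (N i) = Nat.card G) (S : Finset ι) :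
    (⨆ i ∈ S, N i) ⊔ (⨆ i ∈ Sᶜ, N i) = ⊤ := by
  rw [← Finset.iSup_union, Finset.union_compl]
  exact eq_top_of_card_eq _ ((card_biSup hcomm hcop _).trans hcard)

theorem inf_biSup_eq_biSup_inf [Fintype ι]
    (hcomm : Pairwise fun i j => N i ≤ centralizer (N j))
    (hcop : Pairwise fun i j => (Nat.card (N i)).Coprime (Nat.card (N j))) {M : Subgroup G}
    (hM : ∏ i, Nat.card ↥(M ⊓ N i) = Nat.card M) (S : Finset ι) :
    M ⊓ ⨆ i ∈ S, N i = ⨆ i ∈ S, M ⊓ N i := by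
  have hcomm' := pairwise_le_centralizer_of_le hcomm fun i => (inf_le_right : M ⊓ N i ≤ N i)
  have hcop' := pairwise_coprime_card_of_le hcop fun i => (inf_le_right : M ⊓ N i ≤ N i)
  have hsplit : Nat.card M = Nat.card ↥(⨆ i ∈ S, M ⊓ N i) * Nat.card ↥(⨆ i ∈ Sᶜ, M ⊓ N i) := by
    rw [card_biSup hcomm' hcop', card_biSup hcomm' hcop', Finset.prod_mul_prod_compl, hM]
  have hcopS : (Nat.card ↥(M ⊓ ⨆ i ∈ S, N i)).Coprime (Nat.card ↥(⨆ i ∈ Sᶜ, M ⊓ N i)) :=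
    ((coprime_card_biSup hcomm hcop disjoint_compl_right).coprime_dvd_left
      (card_dvd_of_le inf_le_right)).coprime_dvd_right
      (card_dvd_of_le (iSup₂_mono fun _ _ => inf_le_right))
  refine (eq_of_le_of_card_ge (le_inf (iSup₂_le fun _ _ => inf_le_left)
    (iSup₂_mono fun _ _ => inf_le_right)) ?_).symm
  exact Nat.le_of_dvd Nat.card_pos
    (hcopS.dvd_of_dvd_mul_right (hsplit ▸ card_dvd_of_le inf_le_left))

theorem ncard_setOf_mem_biSup_and_mem_zpowers {M : Subgroup G} [IsCyclic M]
    (hcomm : Pairwise fun i j => N i ≤ centralizer (N j))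
    (hcop : Pairwise fun i j => (Nat.card (N i)).Coprime (Nat.card (N j)))
    (hNM : ∀ i, N i ≤ M) {p γ β : ι → ℕ} (hp : ∀ i, (p i).Prime)
    (hN : ∀ i, Nat.card (N i) = p i ^ γ i) {S : Finset ι} (hβ : ∀ i ∈ S, 1 ≤ β i ∧ β i ≤ γ i)
    {x : G} (hx : x ∈ M) (hord : orderOf x = ∏ i ∈ S, p i ^ β i) :
    {y | y ∈ ⨆ i ∈ S, N i ∧ x ∈ zpowers y}.ncard = ∏ i ∈ S, (p i ^ γ i - p i ^ (β i - 1)) := by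
  have hset : {y | y ∈ ⨆ i ∈ S, N i ∧ x ∈ zpowers y}
      = {y | y ∈ ⨆ i ∈ S, N i ∧ ∏ i ∈ S, p i ^ β i ∣ orderOf y} := by
    ext y
    exact and_congr_right fun hy =>
      hord ▸ mem_zpowers_iff_orderOf_dvd hx (iSup₂_le (fun i _ => hNM i) hy)
  rw [hset, ncard_setOf_mem_biSup_and_prod_dvd_orderOf hcomm hcop
    fun i hi => hN i ▸ pow_dvd_pow _ (hβ i hi).2]
  refine Finset.prod_congr rfl fun i hi => ?_
  obtain ⟨u, hu⟩ := (N i).isCyclic_iff_exists_zpowers_eq_top.1 (isCyclic_of_le (hNM i))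
  rw [← hu]
  exact ncard_setOf_prime_pow_dvd_orderOf (hp i) (by rw [← Nat.card_zpowers, hu, hN])
    (hβ i hi).1 (hβ i hi).2

end Family

section Sylow

variable {G : Type*} [Group G]

theorem le_centralizer_of_coprime_card {H K : Subgroup G} [H.Normal] [K.Normal]
    (hcop : (Nat.card H).Coprime (Nat.card K)) : H ≤ centralizer K := fun h hh =>
  mem_centralizer_iff.2 fun k hk => (commute_of_normal_of_disjoint H K ‹_› ‹_›
    (disjoint_of_coprime_natCard hcop) h k hh hk).eq.symm

variable [Finite G]

theorem normal_of_card_eq_pow_factorization [Group.IsNilpotent G] {p : ℕ} (hp : p.Prime)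
    {P : Subgroup G} (hP : Nat.card P = p ^ (Nat.card G).factorization p) : P.Normal :=
  have := Fact.mk hp
  inferInstanceAs (Sylow.ofCard P hP : Subgroup G).Normal

/-- The index of `M ⊓ P` in `M` divides the index of the normal subgroup `P`, so it is prime
to `p`. -/
theorem card_inf_of_normal_of_card_eq {p : ℕ} (hp : p.Prime) {P : Subgroup G} [P.Normal]
    (hP : Nat.card P = p ^ (Nat.card G).factorization p) (M : Subgroup G) :
    Nat.card ↥(M ⊓ P) = p ^ (Nat.card M).factorization p := by
  have := Fact.mk hp
  obtain ⟨k, hk⟩ := IsPGroup.iff_card.1 ((IsPGroup.of_card hP).to_le (inf_le_right : M ⊓ P ≤ P))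
  have hidx : ¬ p ∣ (M ⊓ P).relIndex M := fun h => (Sylow.ofCard P hP).not_dvd_index
    (h.trans (inf_relIndex_left M P ▸ relIndex_dvd_index_of_normal P M))
  have hmul : Nat.card ↥(M ⊓ P) * (M ⊓ P).relIndex M = Nat.card M := by
    rw [← relIndex_bot_left, ← relIndex_bot_left, relIndex_mul_relIndex _ _ _ bot_le inf_le_left]
  have hidx0 : (M ⊓ P).relIndex M ≠ 0 := right_ne_zero_of_mul (hmul ▸ Nat.card_pos.ne')
  rw [← hmul, hk, Nat.factorization_mul (pow_ne_zero _ hp.ne_zero) hidx0, Finsupp.add_apply,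
    hp.factorization_pow, Finsupp.single_eq_same, Nat.factorization_eq_zero_of_not_dvd hidx,
    add_zero]

end Sylow

theorem List.prod_ofFn_mem_biSup {G : Type*} [Group G] {r : ℕ} {P : Fin r → Subgroup G}
    {xc : Fin r → G} (hxc : ∀ i, xc i ∈ P i) {S : Finset (Fin r)} (hS : ∀ i ∉ S, xc i = 1) :
    (List.ofFn xc).prod ∈ ⨆ i ∈ S, P i := by
  refine Subgroup.list_prod_mem _ fun z hz => ?_
  obtain ⟨i, rfl⟩ := List.mem_ofFn.1 hz
  by_cases hi : i ∈ S
  · exact le_biSup P hi (hxc i)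
  · exact hS i hi ▸ one_mem _

theorem degree_powerGraph_eq_iff_of_sup_eq_top {G : Type*} [Group G] [Fintype G]
    {H K M : Subgroup G} (hHK : H ≤ centralizer K) (hcop : (Nat.card H).Coprime (Nat.card K))
    (htop : H ⊔ K = ⊤) (hM : IsMaximalCyclic M) {x : G} (hxM : x ∈ M) (hxH : x ∈ H) :
    (powerGraph G).degree x = orderOf x - (orderOf x).totient
        + Nat.card K * {y | y ∈ M ⊓ H ∧ x ∈ zpowers y}.ncard - 1 ↔
      IsMaximalCyclicIn H (M ⊓ H) ∧ x ∈ M ⊓ H ∧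
        ∀ L, IsMaximalCyclicIn H L → x ∈ L → L = M ⊓ H := by
  have hmax := isMaximalCyclicIn_inf_of_sup_eq_top hHK hcop htop hM
  have := hmax.1
  simp only [hmax, mem_inf.2 ⟨hxM, hxH⟩, true_and]
  rw [← ncard_setOf_mem_and_mem_zpowers_eq_iff inf_le_right x]
  have hdeg := degree_powerGraph_add_totient x
  rw [ncard_setOf_mem_zpowers_eq_mul hHK hcop htop hxH] at hdeg
  set A := {y | y ∈ H ∧ x ∈ zpowers y}.ncard
  set B := {y | y ∈ M ⊓ H ∧ x ∈ zpowers y}.ncard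
  have hB : 0 < B := (Set.ncard_pos (Set.toFinite _)).2 ⟨x, ⟨hxM, hxH⟩, mem_zpowers x⟩
  have hK : 0 < Nat.card K := Nat.card_pos
  rw [← Nat.mul_left_cancel_iff hK (m := B) (k := A), mul_comm _ A]
  have hKB := Nat.mul_pos hK hB
  have hφ := Nat.totient_le (orderOf x)
  generalize Nat.card K * B = b at *
  omega

open scoped Classical in
theorem degree_lower_bound_equality_iff_general
    {G : Type*} [Group G] [Fintype G] (hnil : Group.IsNilpotent G)
    (r : ℕ) (p α : Fin r → ℕ) (P : Fin r → Subgroup G)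
    (hp : ∀ i, (p i).Prime) (hmono : StrictMono p)
    (hcard : Fintype.card G = ∏ i, p i ^ α i)
    (hP : ∀ i, Nat.card ↥(P i) = p i ^ α i)
    (x : G) (xc : Fin r → G) (hxc : ∀ i, xc i ∈ P i)
    (hxprod : x = (List.ofFn xc).prod)
    (M : Subgroup G) (hM : IsMaximalCyclic M) (hxM : x ∈ M)
    (γ β : Fin r → ℕ)
    (hMcard : Nat.card ↥M = ∏ j, p j ^ γ j)
    (hβ : ∀ i, xc i ≠ 1 → 1 ≤ β i ∧ β i ≤ γ i)
    (hord : orderOf x = ∏ i ∈ Finset.univ.filter (fun i => xc i ≠ 1), p i ^ β i) :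
    ((powerGraph G).degree x =
        orderOf x - Nat.totient (orderOf x) +
          (∏ j ∈ Finset.univ.filter (fun j => xc j = 1), p j ^ α j) *
            (∏ i ∈ Finset.univ.filter (fun i => xc i ≠ 1), (p i ^ γ i - p i ^ (β i - 1))) -
          1) ↔
      (IsMaximalCyclicIn (⨆ i ∈ Finset.univ.filter (fun i => xc i ≠ 1), P i)
          (⨆ i ∈ Finset.univ.filter (fun i => xc i ≠ 1), (M ⊓ P i)) ∧
        (x ∈ (⨆ i ∈ Finset.univ.filter (fun i => xc i ≠ 1), (M ⊓ P i) : Subgroup G)) ∧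
        (∀ K : Subgroup G,
          IsMaximalCyclicIn (⨆ i ∈ Finset.univ.filter (fun i => xc i ≠ 1), P i) K →
          x ∈ K → K = ⨆ i ∈ Finset.univ.filter (fun i => xc i ≠ 1), (M ⊓ P i))) := by
  have := hnil
  have := hM.1
  have hinj := hmono.injective
  have hPsyl (i : Fin r) : Nat.card (P i) = p i ^ (Nat.card G).factorization (p i) := by
    rw [hP, Nat.card_eq_fintype_card, hcard, Nat.factorization_prod_pow_apply hp hinj]
  have hnormal (i : Fin r) : (P i).Normal := normal_of_card_eq_pow_factorization (hp i) (hPsyl i)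
  have hMP (i : Fin r) : Nat.card ↥(M ⊓ P i) = p i ^ γ i := by
    rw [card_inf_of_normal_of_card_eq (hp i) (hPsyl i), hMcard,
      Nat.factorization_prod_pow_apply hp hinj]
  have hcop : Pairwise fun i j => (Nat.card (P i)).Coprime (Nat.card (P j)) := fun i j hij => by
    simpa only [hP] using Nat.coprime_pow_primes (α i) (α j) (hp i) (hp j) (hinj.ne hij)
  have hcomm : Pairwise fun i j => P i ≤ centralizer (P j) :=
    fun i j hij => le_centralizer_of_coprime_card (hcop hij)
  set τ := Finset.univ.filter fun i => xc i ≠ 1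
  have hxH : x ∈ ⨆ i ∈ τ, P i :=
    hxprod ▸ List.prod_ofFn_mem_biSup hxc fun i hi => by simpa [τ] using hi
  have hMτ : M ⊓ ⨆ i ∈ τ, P i = ⨆ i ∈ τ, M ⊓ P i :=
    inf_biSup_eq_biSup_inf hcomm hcop (by simp_rw [hMP]; exact hMcard.symm) τ
  have hcount := ncard_setOf_mem_biSup_and_mem_zpowers
    (pairwise_le_centralizer_of_le hcomm fun i => (inf_le_right : M ⊓ P i ≤ P i))
    (pairwise_coprime_card_of_le hcop fun i => (inf_le_right : M ⊓ P i ≤ P i))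
    (fun i => inf_le_left) hp hMP (fun i hi => hβ i (by simpa [τ] using hi)) hxM hord
  have hτc : Finset.univ.filter (fun j => xc j = 1) = τᶜ := by ext; simp [τ]
  have hK : ∏ j ∈ τᶜ, p j ^ α j = Nat.card ↥(⨆ i ∈ τᶜ, P i) := by
    simp_rw [card_biSup hcomm hcop, hP]
  rw [hτc, hK, ← hcount, ← hMτ]
  exact degree_powerGraph_eq_iff_of_sup_eq_top
    (biSup_le_centralizer_biSup hcomm disjoint_compl_right)
    (coprime_card_biSup hcomm hcop disjoint_compl_right)
    (biSup_sup_biSup_compl_eq_top hcomm hcop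
      (by simp_rw [hP]; rw [Nat.card_eq_fintype_card, hcard]) τ) hM hxM hxH

open scoped Classical in
/-- Equality case of the degree lower bound: equality holds iff `∏_{i ∈ τ_x} M_i` is the
unique maximal cyclic subgroup of `∏_{i ∈ τ_x} P_i` containing `x`, where `M_i = M ⊓ P_i`. -/
theorem degree_lower_bound_equality_iff
    {G : Type*} [Group G] [Fintype G] (hnil : Group.IsNilpotent G)
    (r : ℕ) (p α : Fin r → ℕ) (P : Fin r → Subgroup G)
    (hp : ∀ i, (p i).Prime) (hmono : StrictMono p) (hα : ∀ i, 1 ≤ α i)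
    (hcard : Fintype.card G = ∏ i, p i ^ α i)
    (hP : ∀ i, Nat.card ↥(P i) = p i ^ α i)
    (x : G) (hx1 : x ≠ 1) (xc : Fin r → G) (hxc : ∀ i, xc i ∈ P i)
    (hxprod : x = (List.ofFn xc).prod)
    (M : Subgroup G) (hM : IsMaximalCyclic M) (hxM : x ∈ M)
    (γ β : Fin r → ℕ)
    (hγ : ∀ j, 1 ≤ γ j ∧ γ j ≤ α j)
    (hMcard : Nat.card ↥M = ∏ j, p j ^ γ j)
    (hβ : ∀ i, xc i ≠ 1 → 1 ≤ β i ∧ β i ≤ γ i)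
    (hord : orderOf x = ∏ i ∈ Finset.univ.filter (fun i => xc i ≠ 1), p i ^ β i) :
    ((powerGraph G).degree x =
        orderOf x - Nat.totient (orderOf x) +
          (∏ j ∈ Finset.univ.filter (fun j => xc j = 1), p j ^ α j) *
            (∏ i ∈ Finset.univ.filter (fun i => xc i ≠ 1), (p i ^ γ i - p i ^ (β i - 1))) -
          1) ↔
      (IsMaximalCyclicIn (⨆ i ∈ Finset.univ.filter (fun i => xc i ≠ 1), P i)
          (⨆ i ∈ Finset.univ.filter (fun i => xc i ≠ 1), (M ⊓ P i)) ∧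
        (x ∈ (⨆ i ∈ Finset.univ.filter (fun i => xc i ≠ 1), (M ⊓ P i) : Subgroup G)) ∧
        (∀ K : Subgroup G,
          IsMaximalCyclicIn (⨆ i ∈ Finset.univ.filter (fun i => xc i ≠ 1), P i) K →
          x ∈ K → K = ⨆ i ∈ Finset.univ.filter (fun i => xc i ≠ 1), (M ⊓ P i))) :=
  degree_lower_bound_equality_iff_general hnil r p α P hp hmono hcard hP x xc hxc hxprod M hM hxM γ
    β hMcard hβ hord
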